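/- arXiv:1305.2541 — 3 statements merged into one kernel-verified Lean document; each statement's English description precedes it below -/
import Mathlib

section
/- Let A be a Grothendieck abelian category and B ⊆ A a thick (Serre) subcategory. Then the inclusion B → A admits a right adjoint if and only if B is closed under arbitrary colimits taken in A (equivalently, closed under arbitrary coproducts). -/
open CategoryTheory CategoryTheory.Limits

universe v u

/-- A Serre (thick) class of objects in an abelian category: it contains the zero objects and
is closed under subobjects, quotients, and extensions. -/
def IsSerreClass {A : Type u} [Category.{v} A] [Abelian A] (P : A → Prop) : Prop :=
  (∀ X : A, IsZero X → P X) ∧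
  (∀ ⦃X Y : A⦄ (f : X ⟶ Y), Mono f → P Y → P X) ∧
  (∀ ⦃X Y : A⦄ (f : X ⟶ Y), Epi f → P X → P Y) ∧
  (∀ S : ShortComplex A, S.ShortExact → P S.X₁ → P S.X₃ → P S.X₂)

/-!
If the inclusion `ι` of `B` has a right adjoint, the counit `ι R X ⟶ X` at a colimit `X` of
objects of `B` is an epimorphism, because every coprojection factors through it; closure under
quotients then puts `X` in `B`. Conversely, the supremum of all subobjects of `X` lying in `B` is
a quotient of their coproduct, hence lies in `B`, and every morphism from an object of `B` to `X`
factors through it since its image lies in `B`. This largest `B`-subobject is the coreflection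
of `X`.
-/

section Coreflective

variable {C : Type u} [Category.{v} C] (P : C → Prop)

theorem isLeftAdjoint_ι_of_forall_exists_subobject
    (h : ∀ X : C, ∃ S : Subobject X, P S ∧ ∀ ⦃Y : C⦄ (g : Y ⟶ X), P Y → S.Factors g) :
    (ObjectProperty.ι P).IsLeftAdjoint := by
  choose S hS hfac using h
  refine isLeftAdjoint_iff_hasTerminal_costructuredArrow.2 fun X => ?_
  let t : CostructuredArrow (ObjectProperty.ι P) X :=
    CostructuredArrow.mk (Y := (⟨S X, hS X⟩ : ObjectProperty.FullSubcategory P)) (S X).arrow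
  refine IsTerminal.hasTerminal (X := t) (IsTerminal.ofUniqueHom
    (fun Y => CostructuredArrow.homMk (ObjectProperty.homMk
      ((S X).factorThru Y.hom (hfac X Y.hom Y.left.property))) ?_) ?_)
  · exact (S X).factorThru_arrow _ (hfac X Y.hom Y.left.property)
  · intro Y m
    ext
    rw [← cancel_mono (S X).arrow]
    simpa [t] using CostructuredArrow.w m

theorem prop_of_isColimit_of_isLeftAdjoint_ι [(ObjectProperty.ι P).IsLeftAdjoint]
    (hquot : ∀ ⦃X Y : C⦄ (f : X ⟶ Y), Epi f → P X → P Y)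
    {J : Type*} [Category J] {F : J ⥤ C} {c : Cocone F} (hc : IsColimit c)
    (hF : ∀ j, P (F.obj j)) : P c.pt := by
  let adj := Adjunction.ofIsLeftAdjoint (ObjectProperty.ι P)
  have hε : Epi (adj.counit.app c.pt) := ⟨fun a b hab => hc.hom_ext fun j => by
    have hj : c.ι.app j = (ObjectProperty.ι P).map (adj.homEquiv ⟨_, hF j⟩ _ (c.ι.app j)) ≫
        adj.counit.app c.pt := by
      have := adj.homEquiv_counit (g := adj.homEquiv ⟨_, hF j⟩ _ (c.ι.app j))
      rw [Equiv.symm_apply_apply] at this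
      exact this
    rw [hj, Category.assoc, Category.assoc, hab]⟩
  exact hquot _ hε ((ObjectProperty.ι P).rightAdjoint.obj c.pt).property

end Coreflective

section SerreClass

variable {A : Type u} [Category.{v} A] [Abelian A] {P : A → Prop}

theorem IsSerreClass.prop_of_iso (hP : IsSerreClass P) {X Y : A} (e : X ≅ Y) (hX : P X) : P Y :=
  hP.2.2.1 e.hom inferInstance hX

theorem IsSerreClass.prop_imageSubobject (hP : IsSerreClass P) {X Y : A} (g : Y ⟶ X)
    (hY : P Y) : P (imageSubobject g) :=
  hP.2.2.1 (factorThruImageSubobject g) inferInstance hY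

variable [WellPowered.{v} A] [HasCoproducts.{v} A]

theorem IsSerreClass.prop_sSup (hP : IsSerreClass P)
    (hcoprod : ∀ (ι : Type v) (f : ι → A), (∀ i, P (f i)) → P (∐ f))
    {X : A} (s : Set (Subobject X)) (hs : ∀ S ∈ s, P S) : P (Subobject.sSup.{v} s) := by
  have himage : P (image (Subobject.smallCoproductDesc.{v} s)) :=
    hP.2.2.1 (factorThruImage _) inferInstance
      (hcoprod _ _ fun j => hs _ ((Subobject.symm_apply_mem_iff_mem_image _ _ _).2 j.2))
  exact hP.prop_of_iso (Subobject.underlyingIso _).symm himage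

variable (P) in
noncomputable def torsionSubobject (X : A) : Subobject X :=
  Subobject.sSup.{v} {S : Subobject X | P S}

theorem IsSerreClass.factors_torsionSubobject (hP : IsSerreClass P) {X Y : A} (g : Y ⟶ X)
    (hY : P Y) : (torsionSubobject P X).Factors g :=
  Subobject.factors_of_le g (Subobject.le_sSup.{v} _ _ (hP.prop_imageSubobject g hY))
    ((Subobject.factors_iff _ _).2 ⟨_, imageSubobject_arrow_comp g⟩)

end SerreClass

theorem statement2_general {A : Type u} [Category.{v} A] [Abelian A]
    [HasColimits A] [HasSeparator A]
    (P : A → Prop) (hP : IsSerreClass P) :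
    (ObjectProperty.ι P).IsLeftAdjoint ↔
      (∀ (ι : Type v) (f : ι → A), (∀ i, P (f i)) → P (∐ f)) := by
  refine ⟨fun _ ι f hf => ?_, fun hcoprod => ?_⟩
  · exact prop_of_isColimit_of_isLeftAdjoint_ι P hP.2.2.1 (colimit.isColimit _) fun j => hf j.as
  · exact isLeftAdjoint_ι_of_forall_exists_subobject P fun X =>
      ⟨torsionSubobject P X, hP.prop_sSup hcoprod _ fun _ h => h,
        fun _ g hY => hP.factors_torsionSubobject g hY⟩

/-- Let `A` be a Grothendieck abelian category (an AB5 abelian category with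
a generator) and `B ⊆ A` a thick (Serre) subcategory, given by the class `P` of its objects.
Then the inclusion `B → A` admits a right adjoint if and only if `B` is closed under
arbitrary coproducts taken in `A` (equivalently, arbitrary colimits). -/
theorem statement2 {A : Type u} [Category.{v} A] [Abelian A]
    [HasColimits A] [HasFilteredColimits A] [AB5 A] [HasSeparator A]
    (P : A → Prop) (hP : IsSerreClass P) :
    (ObjectProperty.ι P).IsLeftAdjoint ↔
      (∀ (ι : Type v) (f : ι → A), (∀ i, P (f i)) → P (∐ f)) :=
  statement2_general P hP
end

section
/- Let R be a commutative ring and S a nonzero R-module such that for every nonzero submodule N ⊆ S, the module S belongs to add(N) (S is a subquotient of a finite direct sum of copies of N). Then the annihilator ann_R(S) is a prime ideal of R. -/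
universe u v

/-- `S` belongs to `add N`: `S` is a subquotient of a finite direct sum of copies of `N`,
i.e. there is a surjective `R`-linear map onto `S` from a submodule of `N^n`. -/
def memAddModule (R : Type u) [CommRing R] {S : Type v} [AddCommGroup S] [Module R S]
    (N : Submodule R S) : Prop :=
  ∃ (n : ℕ) (T : Submodule R (Fin n → N)) (f : T →ₗ[R] S), Function.Surjective f

/-- Let `R` be a commutative ring and `S` a nonzero `R`-module such that for
every nonzero submodule `N ⊆ S` the module `S` belongs to `add N` (i.e. `S` is a subquotient
of a finite direct sum of copies of `N`; such an `S` is called quasi-final). Then the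
annihilator `ann_R(S)` is a prime ideal of `R`. -/
theorem statement6 {R : Type u} [CommRing R] {S : Type v} [AddCommGroup S] [Module R S]
    [Nontrivial S]
    (h : ∀ N : Submodule R S, N ≠ ⊥ → memAddModule R N) :
    (Module.annihilator R S).IsPrime := by
  constructor
  · intro htop
    obtain ⟨s, hs⟩ := exists_ne (0 : S)
    have h1 : (1 : R) ∈ Module.annihilator R S := htop ▸ Submodule.mem_top
    rw [Module.mem_annihilator] at h1
    exact hs (by simpa using h1 s)
  · intro a b hab
    by_contra hcon
    push_neg at hcon
    obtain ⟨ha, hb⟩ := hcon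
    rw [Module.mem_annihilator] at ha hb hab
    push_neg at ha hb
    obtain ⟨s₀, hs₀⟩ := ha
    set N : Submodule R S := LinearMap.range (a • (LinearMap.id : S →ₗ[R] S)) with hN
    have hNne : N ≠ ⊥ := by
      intro hbot
      apply hs₀
      have hmem : a • s₀ ∈ N := ⟨s₀, rfl⟩
      rw [hbot] at hmem
      simpa using hmem
    obtain ⟨n, T, f, hf⟩ := h N hNne
    obtain ⟨s₁, hs₁⟩ := hb
    obtain ⟨t, ht⟩ := hf s₁
    have hbt : b • t = 0 := by
      apply Subtype.ext
      show b • (t : Fin n → N) = 0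
      funext i
      apply Subtype.ext
      show b • ((t : Fin n → N) i : S) = 0
      obtain ⟨x, hx⟩ := ((t : Fin n → N) i).2
      simp only [LinearMap.smul_apply, LinearMap.id_apply] at hx
      rw [← hx, smul_smul, mul_comm, hab x]
    apply hs₁
    calc b • s₁ = b • f t := by rw [ht]
    _ = f (b • t) := (map_smul f b t).symm
    _ = 0 := by rw [hbt, map_zero]
end

section
/- Let R be a commutative ring, p ⊂ R a prime ideal, A an Azumaya R-algebra, and set Ā = A/pA. If N ⊆ Ā is a nonzero finitely generated left Ā-submodule, then the two-sided annihilator {x ∈ Ā : xN = 0} is zero. -/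
open scoped TensorProduct

universe u v

/-- An Azumaya algebra over a commutative ring `R`: an `R`-algebra which is finitely
generated, projective and faithful as an `R`-module, and such that
`A ⊗[R] Aᵐᵒᵖ ≅ End_R(A)` as `R`-algebras. -/
def IsAzumayaAlg (R : Type u) (A : Type v) [CommRing R] [Ring A] [Algebra R A] : Prop :=
  Module.Finite R A ∧ Module.Projective R A ∧ FaithfulSMul R A ∧
    Nonempty ((A ⊗[R] Aᵐᵒᵖ) ≃ₐ[R] Module.End R A)

/-!
Let `κ` be the residue field at `p` and `B = κ ⊗[R] A`. Then
`B ⊗[κ] Bᵐᵒᵖ ≅ κ ⊗[R] (A ⊗[R] Aᵐᵒᵖ) ≅ κ ⊗[R] End_R(A)`, which is a matrix algebra over `κ`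
because `A` becomes free over the local ring `R_p`. Hence `B` is a simple ring, so `u B w = 0`
forces `u = 0` or `w = 0`. As `A` is flat, the kernel of `A → B` is exactly `pA`, so `Ā` embeds
in `B` and spans it over `κ`. If `x` kills a nonzero `y ∈ N` then `x Ā y ⊆ x N = 0`, hence
`x B y = 0` and `x = 0`.
-/

theorem IsSimpleRing.eq_zero_or_eq_zero_of_forall_mul_mul_eq_zero {S : Type*} [Ring S]
    [IsSimpleRing S] {u w : S} (h : ∀ b, u * b * w = 0) : u = 0 ∨ w = 0 := by
  refine or_iff_not_imp_right.mpr fun hw ↦ ?_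
  let I : TwoSidedIdeal S := .mk' {v | ∀ b, u * b * v = 0} (fun _ ↦ mul_zero _)
    (fun ha hb c ↦ by rw [mul_add, ha, hb, add_zero]) (fun ha c ↦ by rw [mul_neg, ha, neg_zero])
    (fun {a _} hv c ↦ by rw [← mul_assoc, mul_assoc u, hv])
    (fun {_ a} hv c ↦ by rw [← mul_assoc, hv, zero_mul])
  have hmem (v : S) : v ∈ I ↔ ∀ b, u * b * v = 0 := TwoSidedIdeal.mem_mk' ..
  simpa using (hmem 1).mp (one_mem_of_ne_zero_mem I hw ((hmem w).mpr h)) 1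

theorem IsSimpleRing.of_tensorProduct_left {k B C : Type*} [Field k] [Ring B] [Ring C]
    [Algebra k B] [Algebra k C] [IsSimpleRing (B ⊗[k] C)] : IsSimpleRing B := by
  have : Nontrivial B := by
    by_contra!
    exact not_subsingleton (B ⊗[k] C) inferInstance
  have : Nontrivial C := by
    by_contra!
    exact not_subsingleton (B ⊗[k] C) inferInstance
  refine .of_eq_bot_or_eq_top fun I ↦ or_iff_not_imp_right.mpr fun hI ↦ ?_
  let q := I.ringCon.mkₐ k
  have hq (x : B) : q x = 0 ↔ x ∈ I := by
    conv_rhs => rw [← I.ker_ringCon_mk']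
    exact (TwoSidedIdeal.mem_ker _).symm
  have : Nontrivial I.ringCon.Quotient := by
    by_contra!
    exact hI (I.one_mem_iff.mp ((hq 1).mp (Subsingleton.elim _ _)))
  -- `B ⊗ C → (B ⧸ I) ⊗ C` is injective by simplicity and kills `I ⊗ 1`.
  have hinj := (Algebra.TensorProduct.map q (AlgHom.id k C)).toRingHom.injective
  refine eq_bot_iff.mpr fun x hx ↦ Algebra.TensorProduct.includeLeft_injective (S := k)
    (algebraMap k C).injective (hinj ?_)
  simp [(hq x).mpr hx]

section BaseChange

variable (R S : Type*) [CommRing R] [CommRing S] [Algebra R S]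

/-- `Algebra.TensorProduct.cancelBaseChange` for algebras that need not be commutative. -/
noncomputable def Algebra.TensorProduct.cancelBaseChangeOfRing (A B : Type*) [Ring A] [Ring B]
    [Algebra R B] [Algebra S A] [Algebra R A] [IsScalarTower R S A] :
    A ⊗[S] (S ⊗[R] B) ≃ₐ[S] A ⊗[R] B :=
  AlgEquiv.ofLinearEquiv (TensorProduct.AlgebraTensorModule.cancelBaseChange R S S A B)
    (by simp [Algebra.TensorProduct.one_def]) <|
      (LinearMap.map_mul_iff _).mpr <| by ext; simp

noncomputable def Module.End.baseChangeAlgEquiv [Module.Flat R S] (M : Type*) [AddCommGroup M]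
    [Module R M] [Module.FinitePresentation R M] :
    S ⊗[R] Module.End R M ≃ₐ[S] Module.End S (S ⊗[R] M) :=
  let h := Module.FinitePresentation.isBaseChange_map R M M S
  AlgEquiv.ofLinearEquiv h.equiv (by simp [Algebra.TensorProduct.one_def, h.equiv_tmul]) <|
    LinearMap.map_mul_of_map_mul_tmul fun _ _ _ _ ↦ by
      simp only [LinearEquiv.coe_coe, h.equiv_tmul, LinearMap.baseChangeHom_apply,
        LinearMap.baseChange_mul, smul_mul_smul_comm]

noncomputable def Algebra.TensorProduct.baseChangeTensorOpAlgEquiv (A : Type*) [Ring A]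
    [Algebra R A] :
    (S ⊗[R] A) ⊗[S] (S ⊗[R] A)ᵐᵒᵖ ≃ₐ[S] S ⊗[R] (A ⊗[R] Aᵐᵒᵖ) :=
  let opEquiv : (S ⊗[R] A)ᵐᵒᵖ ≃ₐ[S] S ⊗[R] Aᵐᵒᵖ :=
    (opAlgEquiv R S S A).symm.trans (congr (AlgEquiv.toOpposite S S).symm .refl)
  (congr .refl opEquiv).trans <|
    (cancelBaseChangeOfRing R S (S ⊗[R] A) Aᵐᵒᵖ).trans (TensorProduct.assoc R R S S A Aᵐᵒᵖ)

variable {R S} in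
theorem Algebra.TensorProduct.one_tmul_mul_mul_eq_zero {A : Type*} [Ring A] [Algebra R A]
    {u w : A} (h : ∀ c : A, (1 : S) ⊗ₜ[R] (u * c * w) = 0) (b : S ⊗[R] A) :
    (1 ⊗ₜ u) * b * (1 ⊗ₜ w) = 0 := by
  induction b with
  | zero => simp
  | tmul s c =>
    rw [tmul_mul_tmul, tmul_mul_tmul, one_mul, mul_one, ← mul_one s, ← smul_eq_mul,
      ← TensorProduct.smul_tmul', h c, smul_zero]
  | add b b' hb hb' => rw [mul_add, add_mul, hb, hb', add_zero]

end BaseChange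

namespace Ideal

variable {R : Type*} [CommRing R] (p : Ideal R) [p.IsPrime]

theorem one_tmul_residueField_eq_zero_iff {A : Type*} [Ring A] [Algebra R A] [Module.Flat R A]
    (a : A) : (1 : p.ResidueField) ⊗ₜ[R] a = 0 ↔ a ∈ span (algebraMap R A '' p) := by
  constructor
  · intro h
    let ι := (IsScalarTower.toAlgHom R (R ⧸ p) p.ResidueField).toLinearMap
    have h' : (1 : R ⧸ p) ⊗ₜ[R] a = 0 :=
      Module.Flat.rTensor_preserves_injective_linearMap ι
        p.injective_algebraMap_quotient_residueField (by simpa [ι] using h)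
    have hmem : a ∈ p • (⊤ : Submodule R A) := by
      simpa using congrArg (TensorProduct.quotTensorEquivQuotSMul A p) h'
    have hle : p • (⊤ : Submodule R A) ≤ (span (algebraMap R A '' p)).restrictScalars R := by
      refine Submodule.smul_le.mpr fun r hr x _ ↦ ?_
      rw [Submodule.restrictScalars_mem, Algebra.smul_def, Algebra.commutes]
      exact mul_mem_left _ x (subset_span ⟨r, hr, rfl⟩)
    exact hle hmem
  · intro h
    have hle : span (algebraMap R A '' p) ≤
        RingHom.ker (Algebra.TensorProduct.includeRight : A →ₐ[R] p.ResidueField ⊗[R] A) := by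
      refine span_le.mpr ?_
      rintro _ ⟨r, hr, rfl⟩
      simp [algebraMap_residueField_eq_zero.mpr hr]
    simpa using hle h

theorem isSimpleRing_residueField_tensor_end (M : Type*) [AddCommGroup M] [Module R M]
    [Module.Finite R M] [Module.Projective R M]
    [Nontrivial (p.ResidueField ⊗[R] Module.End R M)] :
    IsSimpleRing (p.ResidueField ⊗[R] Module.End R M) := by
  classical
  let R' := Localization.AtPrime p
  have : Module.Free R' (R' ⊗[R] M) := Module.free_of_flat_of_isLocalRing
  have : Module.FinitePresentation R M := Module.finitePresentation_of_projective R M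
  let n := Module.Free.ChooseBasisIndex R' (R' ⊗[R] M)
  let b : Module.Basis n R' (R' ⊗[R] M) := Module.Free.chooseBasis R' (R' ⊗[R] M)
  let e : p.ResidueField ⊗[R] Module.End R M ≃+* Matrix n n p.ResidueField :=
    (Algebra.TensorProduct.cancelBaseChangeOfRing R R' _ _).symm.toRingEquiv.trans <|
    (Algebra.TensorProduct.congr (AlgEquiv.refl (R := R') (A₁ := p.ResidueField))
      ((Module.End.baseChangeAlgEquiv R R' M).trans (algEquivMatrix b))).toRingEquiv.trans
    (matrixEquivTensor n R' p.ResidueField).symm.toRingEquiv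
  have : Nonempty n := by
    by_contra!
    have : Subsingleton (Matrix n n p.ResidueField) := inferInstance
    exact not_subsingleton _ e.toEquiv.subsingleton
  exact .of_ringEquiv e.symm inferInstance

theorem isSimpleRing_residueField_tensor {A : Type*} [Ring A] [Algebra R A] [Module.Finite R A]
    [Module.Projective R A] (e : A ⊗[R] Aᵐᵒᵖ ≃ₐ[R] Module.End R A)
    [Nontrivial (p.ResidueField ⊗[R] A)] : IsSimpleRing (p.ResidueField ⊗[R] A) := by
  let B := p.ResidueField ⊗[R] A
  let e' : B ⊗[p.ResidueField] Bᵐᵒᵖ ≃ₐ[p.ResidueField] p.ResidueField ⊗[R] Module.End R A :=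
    (Algebra.TensorProduct.baseChangeTensorOpAlgEquiv R _ A).trans
      (Algebra.TensorProduct.congr .refl e)
  have : Nontrivial (p.ResidueField ⊗[R] Module.End R A) := e'.toEquiv.symm.nontrivial
  have := isSimpleRing_residueField_tensor_end p A
  have : IsSimpleRing (B ⊗[p.ResidueField] Bᵐᵒᵖ) :=
    .of_ringEquiv e'.symm.toRingEquiv inferInstance
  exact .of_tensorProduct_left (k := p.ResidueField) (C := Bᵐᵒᵖ)

end Ideal

theorem statement7_general {R : Type u} [CommRing R] (p : Ideal R) (hp : p.IsPrime)
    {A : Type v} [Ring A] [Algebra R A] (hA : IsAzumayaAlg R A)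
    {Abar : Type v} [Ring Abar] [Algebra R Abar]
    (π : A →ₐ[R] Abar) (hsurj : Function.Surjective π)
    (hker : RingHom.ker π.toRingHom = Ideal.span (algebraMap R A '' (p : Set R)))
    (N : Submodule Abar Abar) (hN : N ≠ ⊥) :
    ∀ x : Abar, (∀ n ∈ N, x * n = 0) → x = 0 := by
  obtain ⟨_, _, -, ⟨e⟩⟩ := hA
  intro x hx
  obtain ⟨y, hyN, hy0⟩ := (Submodule.ne_bot_iff N).mp hN
  obtain ⟨m, rfl⟩ := hsurj y
  obtain ⟨a, rfl⟩ := hsurj x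
  have hκ (c : A) : (1 : p.ResidueField) ⊗ₜ[R] c = 0 ↔ π c = 0 := by
    rw [p.one_tmul_residueField_eq_zero_iff, ← hker]
    rfl
  have hm : (1 : p.ResidueField) ⊗ₜ[R] m ≠ 0 := (hκ m).not.mpr hy0
  have : Nontrivial (p.ResidueField ⊗[R] A) := nontrivial_of_ne _ _ hm
  have := p.isSimpleRing_residueField_tensor e
  have hAbar (c : A) : (1 : p.ResidueField) ⊗ₜ[R] (a * c * m) = 0 := by
    rw [hκ, map_mul, map_mul, mul_assoc]
    exact hx _ (by simpa using N.smul_mem (π c) hyN)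
  exact (hκ a).mp <| (IsSimpleRing.eq_zero_or_eq_zero_of_forall_mul_mul_eq_zero
    (Algebra.TensorProduct.one_tmul_mul_mul_eq_zero hAbar)).resolve_right hm

/-- Let `R` be a commutative ring, `p ⊂ R` a prime ideal, `A` an Azumaya
`R`-algebra, and `Ā = A/pA` (encoded as an `R`-algebra `Abar` equipped with a surjection
`π : A → Abar` whose kernel is the ideal `pA` generated by the image of `p`). If
`N ⊆ Ā` is a nonzero finitely generated left `Ā`-submodule, then the annihilator
`{x ∈ Ā : xN = 0}` is zero. -/
theorem statement7 {R : Type u} [CommRing R] (p : Ideal R) (hp : p.IsPrime)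
    {A : Type v} [Ring A] [Algebra R A] (hA : IsAzumayaAlg R A)
    {Abar : Type v} [Ring Abar] [Algebra R Abar]
    (π : A →ₐ[R] Abar) (hsurj : Function.Surjective π)
    (hker : RingHom.ker π.toRingHom = Ideal.span (algebraMap R A '' (p : Set R)))
    (N : Submodule Abar Abar) (hfg : N.FG) (hN : N ≠ ⊥) :
    ∀ x : Abar, (∀ n ∈ N, x * n = 0) → x = 0 :=
  statement7_general p hp hA π hsurj hker N hN
end
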